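/- For a Ricci-flat pseudo-Riemannian metric g on an n-manifold M (n odd), the metric g̃ = −2 du dt + t² g on ℝ₊ × M × ℝ (coordinates t, u) is Ricci-flat and admits the parallel null vector field ∂_u. -/

import Mathlib

open scoped BigOperators

/-! Local-coordinate pseudo-Riemannian geometry on a chart `ι → ℝ`. -/

variable {ι : Type} [Fintype ι] [DecidableEq ι]

/-- Partial derivative of a function in the i-th coordinate direction. -/
noncomputable def pd (i : ι) (f : (ι → ℝ) → ℝ) (x : ι → ℝ) : ℝ :=
  fderiv ℝ f x (Pi.single i 1)

/-- Christoffel symbols Γ^k_{ij} of the Levi-Civita connection of the metric g. -/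
noncomputable def christoffel (g : (ι → ℝ) → Matrix ι ι ℝ) (k i j : ι) (x : ι → ℝ) : ℝ :=
  (1/2) * ∑ l, (g x)⁻¹ k l *
    (pd i (fun y => g y l j) x + pd j (fun y => g y l i) x - pd l (fun y => g y i j) x)

/-- Riemann curvature tensor R^l_{kij} (component of R(∂ᵢ,∂ⱼ)∂ₖ along ∂ₗ). -/
noncomputable def riemann (g : (ι → ℝ) → Matrix ι ι ℝ) (l k i j : ι) (x : ι → ℝ) : ℝ :=
  pd i (christoffel g l j k) x - pd j (christoffel g l i k) x
  + ∑ m, christoffel g l i m x * christoffel g m j k x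
  - ∑ m, christoffel g l j m x * christoffel g m i k x

/-- Ricci tensor Ric_{jk} = R^i_{j i k}. -/
noncomputable def ricci (g : (ι → ℝ) → Matrix ι ι ℝ) (j k : ι) (x : ι → ℝ) : ℝ :=
  ∑ i, riemann g i j i k x

/-- Scalar curvature Scal = g^{jk} Ric_{jk}. -/
noncomputable def scal (g : (ι → ℝ) → Matrix ι ι ℝ) (x : ι → ℝ) : ℝ :=
  ∑ j, ∑ k, (g x)⁻¹ j k * ricci g j k x

/-- Schouten tensor P = (1/(n-2))(Ric - (Scal/(2(n-1))) g). -/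
noncomputable def schouten (g : (ι → ℝ) → Matrix ι ι ℝ) (j k : ι) (x : ι → ℝ) : ℝ :=
  (1 / ((Fintype.card ι : ℝ) - 2)) *
    (ricci g j k x - scal g x / (2 * ((Fintype.card ι : ℝ) - 1)) * g x j k)

/-- Covariant derivative of the vector field K in the direction of the tangent
vector v at the point x, (∇_v K)^k = v(K^k) + Γ^k_{ij} vⁱ Kʲ. -/
noncomputable def covDeriv (g : (ι → ℝ) → Matrix ι ι ℝ) (K : (ι → ℝ) → ι → ℝ)
    (v : ι → ℝ) (x : ι → ℝ) : ι → ℝ :=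
  fun k => fderiv ℝ (fun y => K y k) x v
    + ∑ i, ∑ j, christoffel g k i j x * v i * K x j

/-- Index type for the ambient space ℝ₊ × M × ℝ: the `t` coordinate, the
coordinates of M, and the `u` coordinate. -/
abbrev AmbIdx (ι : Type) := Unit ⊕ ι ⊕ Unit

/-- The index of the coordinate `t`. -/
abbrev tIdx : AmbIdx ι := Sum.inl ()
/-- The index of the coordinate `u`. -/
abbrev uIdx : AmbIdx ι := Sum.inr (Sum.inr ())

/-- The ambient metric g̃ = −2 du dt + t² g in the coordinates (t, x, u). -/
noncomputable def ambMetric (g : (ι → ℝ) → Matrix ι ι ℝ)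
    (y : AmbIdx ι → ℝ) : Matrix (AmbIdx ι) (AmbIdx ι) ℝ :=
  Matrix.of fun i j =>
    match i, j with
    | Sum.inl _, Sum.inr (Sum.inr _) => -1
    | Sum.inr (Sum.inr _), Sum.inl _ => -1
    | Sum.inr (Sum.inl a), Sum.inr (Sum.inl b) =>
        (y tIdx) ^ 2 * g (fun k => y (Sum.inr (Sum.inl k))) a b
    | _, _ => 0

set_option linter.unusedSectionVars false
set_option maxHeartbeats 1000000

lemma pd_const (i : ι) (c : ℝ) (x : ι → ℝ) : pd i (fun _ => c) x = 0 := by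
  simp [pd]

lemma pd_add (i : ι) {f h : (ι → ℝ) → ℝ} (x : ι → ℝ)
    (hf : DifferentiableAt ℝ f x) (hh : DifferentiableAt ℝ h x) :
    pd i (fun y => f y + h y) x = pd i f x + pd i h x := by
  simp [pd, fderiv_fun_add hf hh]

lemma pd_sub (i : ι) {f h : (ι → ℝ) → ℝ} (x : ι → ℝ)
    (hf : DifferentiableAt ℝ f x) (hh : DifferentiableAt ℝ h x) :
    pd i (fun y => f y - h y) x = pd i f x - pd i h x := by
  simp [pd, fderiv_fun_sub hf hh]

lemma pd_mul (i : ι) {f h : (ι → ℝ) → ℝ} (x : ι → ℝ)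
    (hf : DifferentiableAt ℝ f x) (hh : DifferentiableAt ℝ h x) :
    pd i (fun y => f y * h y) x = pd i f x * h x + f x * pd i h x := by
  simp only [pd, fderiv_fun_mul hf hh]
  simp [smul_eq_mul]; ring

lemma pd_const_mul (i : ι) {f : (ι → ℝ) → ℝ} (c : ℝ) (x : ι → ℝ)
    (hf : DifferentiableAt ℝ f x) :
    pd i (fun y => c * f y) x = c * pd i f x := by
  simp [pd, fderiv_const_mul hf]

lemma pd_sum (i : ι) {κ : Type*} (s : Finset κ) (f : κ → (ι → ℝ) → ℝ) (x : ι → ℝ)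
    (hf : ∀ j ∈ s, DifferentiableAt ℝ (f j) x) :
    pd i (fun y => ∑ j ∈ s, f j y) x = ∑ j ∈ s, pd i (f j) x := by
  simp [pd, fderiv_fun_sum hf]

lemma pd_eventuallyEq (i : ι) {f h : (ι → ℝ) → ℝ} {x : ι → ℝ}
    (hfh : f =ᶠ[nhds x] h) : pd i f x = pd i h x := by
  simp [pd, Filter.EventuallyEq.fderiv_eq hfh]

/-- restriction to the M coordinates, as a CLM -/
noncomputable def restrL : ((AmbIdx ι) → ℝ) →L[ℝ] (ι → ℝ) :=
  ContinuousLinearMap.pi fun k => ContinuousLinearMap.proj (Sum.inr (Sum.inl k))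

lemma restrL_apply (y : AmbIdx ι → ℝ) (k : ι) : restrL y k = y (Sum.inr (Sum.inl k)) := rfl

lemma restrL_eq (y : AmbIdx ι → ℝ) : restrL y = fun k => y (Sum.inr (Sum.inl k)) := rfl

lemma restrL_single_M (c : ι) :
    (restrL : ((AmbIdx ι) → ℝ) →L[ℝ] (ι → ℝ)) (Pi.single (Sum.inr (Sum.inl c)) 1)
      = Pi.single c 1 := by
  funext k
  simp [restrL_apply, Pi.single_apply]

lemma restrL_single_t :
    (restrL : ((AmbIdx ι) → ℝ) →L[ℝ] (ι → ℝ)) (Pi.single tIdx 1) = 0 := by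
  funext k; simp [restrL_apply, Pi.single_apply]

lemma restrL_single_u :
    (restrL : ((AmbIdx ι) → ℝ) →L[ℝ] (ι → ℝ)) (Pi.single (uIdx : AmbIdx ι) 1) = 0 := by
  funext k; simp [restrL_apply, Pi.single_apply]

lemma diffAt_comp_restr {f : (ι → ℝ) → ℝ} {y : AmbIdx ι → ℝ}
    (hf : DifferentiableAt ℝ f (restrL y)) :
    DifferentiableAt ℝ (fun z => f (restrL z)) y :=
  hf.comp y (restrL.differentiableAt (x := y))

lemma pd_comp_restr (i : AmbIdx ι) {f : (ι → ℝ) → ℝ} (y : AmbIdx ι → ℝ)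
    (hf : DifferentiableAt ℝ f (restrL y)) :
    pd i (fun z => f (restrL z)) y
      = fderiv ℝ f (restrL y) (restrL (Pi.single i 1)) := by
  have : fderiv ℝ (fun z => f (restrL z)) y
      = (fderiv ℝ f (restrL y)).comp (restrL : ((AmbIdx ι) → ℝ) →L[ℝ] (ι → ℝ)) := by
    rw [show (fun z => f (restrL z)) = f ∘ restrL from rfl,
      fderiv_comp y hf (restrL.differentiableAt (x := y)),
      (restrL : ((AmbIdx ι) → ℝ) →L[ℝ] (ι → ℝ)).fderiv]
  simp [pd, this]

lemma pd_comp_restr_M (c : ι) {f : (ι → ℝ) → ℝ} (y : AmbIdx ι → ℝ)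
    (hf : DifferentiableAt ℝ f (restrL y)) :
    pd (Sum.inr (Sum.inl c) : AmbIdx ι) (fun z => f (restrL z)) y = pd c f (restrL y) := by
  rw [pd_comp_restr _ _ hf, restrL_single_M]; rfl

lemma pd_comp_restr_t {f : (ι → ℝ) → ℝ} (y : AmbIdx ι → ℝ)
    (hf : DifferentiableAt ℝ f (restrL y)) :
    pd (tIdx : AmbIdx ι) (fun z => f (restrL z)) y = 0 := by
  rw [pd_comp_restr _ _ hf, restrL_single_t]; simp

lemma pd_comp_restr_u {f : (ι → ℝ) → ℝ} (y : AmbIdx ι → ℝ)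
    (hf : DifferentiableAt ℝ f (restrL y)) :
    pd (uIdx : AmbIdx ι) (fun z => f (restrL z)) y = 0 := by
  rw [pd_comp_restr _ _ hf, restrL_single_u]; simp

/-- the t coordinate function -/
lemma diffAt_tcoord (y : AmbIdx ι → ℝ) :
    DifferentiableAt ℝ (fun z : AmbIdx ι → ℝ => z tIdx) y :=
  (ContinuousLinearMap.proj (tIdx : AmbIdx ι) :
    ((AmbIdx ι) → ℝ) →L[ℝ] ℝ).differentiableAt

lemma pd_tcoord (i : AmbIdx ι) (y : AmbIdx ι → ℝ) :
    pd i (fun z : AmbIdx ι → ℝ => z tIdx) y = if i = tIdx then 1 else 0 := by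
  have : (fun z : AmbIdx ι → ℝ => z tIdx)
      = (ContinuousLinearMap.proj (tIdx : AmbIdx ι) : ((AmbIdx ι) → ℝ) →L[ℝ] ℝ) := rfl
  rw [pd, this, ContinuousLinearMap.fderiv]
  simp [ContinuousLinearMap.proj_apply, Pi.single_apply]
  rcases i with _|_|_ <;> simp [tIdx]

variable {E : Type*} [NormedAddCommGroup E] [NormedSpace ℝ E]

lemma contDiff_det {M : E → Matrix ι ι ℝ}
    (h : ∀ i j, ContDiff ℝ (⊤ : ℕ∞) fun y => M y i j) :
    ContDiff ℝ (⊤ : ℕ∞) fun y => (M y).det := by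
  have : (fun y => (M y).det)
      = fun y => ∑ σ : Equiv.Perm ι, (Equiv.Perm.sign σ : ℝ) * ∏ i, M y (σ i) i := by
    funext y; rw [Matrix.det_apply']
  rw [this]
  exact ContDiff.sum fun σ _ => (contDiff_const.mul (contDiff_prod fun i _ => h (σ i) i))

lemma contDiff_adjugate {M : E → Matrix ι ι ℝ}
    (h : ∀ i j, ContDiff ℝ (⊤ : ℕ∞) fun y => M y i j) (i j : ι) :
    ContDiff ℝ (⊤ : ℕ∞) fun y => (M y).adjugate i j := by
  have : (fun y => (M y).adjugate i j)
      = fun y => ((M y).updateRow j (Pi.single i 1)).det := by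
    funext y; rw [Matrix.adjugate_apply]
  rw [this]
  refine contDiff_det fun a b => ?_
  by_cases haj : a = j
  · subst haj; simp only [Matrix.updateRow_apply, if_pos rfl]; exact contDiff_const
  · simp only [Matrix.updateRow_apply, if_neg haj]; exact h a b

lemma contDiff_inv_entry {M : E → Matrix ι ι ℝ}
    (h : ∀ i j, ContDiff ℝ (⊤ : ℕ∞) fun y => M y i j)
    (hdet : ∀ y, IsUnit (M y).det) (i j : ι) :
    ContDiff ℝ (⊤ : ℕ∞) fun y => (M y)⁻¹ i j := by
  have : (fun y => (M y)⁻¹ i j)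
      = fun y => ((M y).det)⁻¹ * (M y).adjugate i j := by
    funext y
    rw [Matrix.inv_def, Matrix.smul_apply, Ring.inverse_eq_inv', smul_eq_mul]
  rw [this]
  exact ((contDiff_det h).inv fun y => (hdet y).ne_zero).mul (contDiff_adjugate h i j)

lemma contDiff_pd {f : (ι → ℝ) → ℝ} (hf : ContDiff ℝ (⊤ : ℕ∞) f) (i : ι) :
    ContDiff ℝ (⊤ : ℕ∞) fun x => pd i f x := by
  unfold pd
  exact (hf.fderiv_right (by simp)).clm_apply contDiff_const

lemma contDiff_christoffel {g : (ι → ℝ) → Matrix ι ι ℝ}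
    (hgsm : ∀ i j, ContDiff ℝ (⊤ : ℕ∞) fun y => g y i j)
    (hdet : ∀ x, IsUnit (g x).det) (k i j : ι) :
    ContDiff ℝ (⊤ : ℕ∞) fun x => christoffel g k i j x := by
  unfold christoffel
  refine contDiff_const.mul (ContDiff.sum fun l _ => ?_)
  exact (contDiff_inv_entry hgsm hdet k l).mul
    (((contDiff_pd (hgsm l j) i).add (contDiff_pd (hgsm l i) j)).sub
      (contDiff_pd (hgsm i j) l))

/-- Explicit inverse of the ambient metric. -/
noncomputable def ambInv (g : (ι → ℝ) → Matrix ι ι ℝ)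
    (y : AmbIdx ι → ℝ) : Matrix (AmbIdx ι) (AmbIdx ι) ℝ :=
  Matrix.of fun i j =>
    match i, j with
    | Sum.inl _, Sum.inr (Sum.inr _) => -1
    | Sum.inr (Sum.inr _), Sum.inl _ => -1
    | Sum.inr (Sum.inl a), Sum.inr (Sum.inl b) =>
        ((y tIdx) ^ 2)⁻¹ * (g (restrL y))⁻¹ a b
    | _, _ => 0

lemma ambMetric_mul_ambInv (g : (ι → ℝ) → Matrix ι ι ℝ)
    (hdet : ∀ x, IsUnit (g x).det)
    (y : AmbIdx ι → ℝ) (ht : y tIdx ≠ 0) :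
    ambMetric g y * ambInv g y = 1 := by
  have hg : g (restrL y) * (g (restrL y))⁻¹ = 1 :=
    Matrix.mul_nonsing_inv _ (hdet _)
  ext i j
  rw [Matrix.mul_apply, Fintype.sum_sum_type]
  rcases i with i | i | i <;> rcases j with j | j | j <;>
      simp [ambMetric, ambInv, Matrix.one_apply, Fintype.sum_sum_type]
  rw [← restrL_eq]
  have h2 : (y tIdx : ℝ) ^ 2 ≠ 0 := pow_ne_zero _ ht
  have : ∀ c, y tIdx ^ 2 * g (restrL y) i c * ((y tIdx ^ 2)⁻¹ * (g (restrL y))⁻¹ c j)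
      = g (restrL y) i c * (g (restrL y))⁻¹ c j := by
    intro c
    rw [show y tIdx ^ 2 * g (restrL y) i c * ((y tIdx ^ 2)⁻¹ * (g (restrL y))⁻¹ c j)
        = (y tIdx ^ 2 * (y tIdx ^ 2)⁻¹) * (g (restrL y) i c * (g (restrL y))⁻¹ c j)
      from by ring, mul_inv_cancel₀ h2, one_mul]
  rw [Finset.sum_congr rfl fun c _ => this c, ← Matrix.mul_apply, hg,
    Matrix.one_apply]

lemma ambInv_eq (g : (ι → ℝ) → Matrix ι ι ℝ) (hdet : ∀ x, IsUnit (g x).det)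
    (y : AmbIdx ι → ℝ) (ht : y tIdx ≠ 0) :
    (ambMetric g y)⁻¹ = ambInv g y :=
  Matrix.inv_eq_right_inv (ambMetric_mul_ambInv g hdet y ht)

lemma sum_ambIdx (F : AmbIdx ι → ℝ) :
    ∑ l, F l = F tIdx + (∑ d, F (Sum.inr (Sum.inl d))) + F uIdx := by
  rw [Fintype.sum_sum_type, Fintype.sum_sum_type]
  simp [tIdx, uIdx, add_assoc]

lemma diffAt_tsq (y : AmbIdx ι → ℝ) :
    DifferentiableAt ℝ (fun z : AmbIdx ι → ℝ => (z tIdx) ^ 2) y :=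
  (diffAt_tcoord y).pow 2

lemma pd_tsq (i : AmbIdx ι) (y : AmbIdx ι → ℝ) :
    pd i (fun z : AmbIdx ι → ℝ => (z tIdx) ^ 2) y
      = if i = tIdx then 2 * y tIdx else 0 := by
  have : (fun z : AmbIdx ι → ℝ => (z tIdx) ^ 2)
      = fun z : AmbIdx ι → ℝ => (z tIdx) * (z tIdx) := by funext z; ring
  rw [this, pd_mul i y (diffAt_tcoord y) (diffAt_tcoord y), pd_tcoord]
  split <;> ring

/-- Derivatives of the entries of the ambient metric. -/
noncomputable def pdAmb (g : (ι → ℝ) → Matrix ι ι ℝ) (i A B : AmbIdx ι)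
    (y : AmbIdx ι → ℝ) : ℝ :=
  match A, B with
  | Sum.inr (Sum.inl a), Sum.inr (Sum.inl b) =>
    (match i with
     | Sum.inl _ => 2 * y tIdx * g (restrL y) a b
     | Sum.inr (Sum.inl c) => (y tIdx) ^ 2 * pd c (fun x => g x a b) (restrL y)
     | Sum.inr (Sum.inr _) => 0)
  | _, _ => 0

lemma diffAt_ambMetric {g : (ι → ℝ) → Matrix ι ι ℝ}
    (hgsm : ∀ i j, ContDiff ℝ (⊤ : ℕ∞) fun x => g x i j) (A B : AmbIdx ι) (y : AmbIdx ι → ℝ) :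
    DifferentiableAt ℝ (fun z => ambMetric g z A B) y := by
  rcases A with ⟨⟩ | a | ⟨⟩ <;> rcases B with ⟨⟩ | b | ⟨⟩ <;>
    first
      | exact differentiableAt_const _
      | exact (diffAt_tsq y).mul
          (diffAt_comp_restr (((hgsm a b).differentiable (by simp)) (restrL y)))

lemma pd_ambMetric {g : (ι → ℝ) → Matrix ι ι ℝ}
    (hgsm : ∀ i j, ContDiff ℝ (⊤ : ℕ∞) fun x => g x i j) (i A B : AmbIdx ι) (y : AmbIdx ι → ℝ) :
    pd i (fun z => ambMetric g z A B) y = pdAmb g i A B y := by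
  rcases A with ⟨⟩ | a | ⟨⟩ <;> rcases B with ⟨⟩ | b | ⟨⟩ <;>
    try { simp [ambMetric, pdAmb, pd] }
  -- remaining: MM case
  show pd i (fun z => (z tIdx) ^ 2 * g (restrL z) a b) y = _
  have hg : DifferentiableAt ℝ (fun z : AmbIdx ι → ℝ => g (restrL z) a b) y :=
    diffAt_comp_restr (((hgsm a b).differentiable (by simp)) (restrL y))
  have hgr : DifferentiableAt ℝ (fun x => g x a b) (restrL y) :=
    ((hgsm a b).differentiable (by simp)) (restrL y)
  rw [pd_mul i y (diffAt_tsq y) hg, pd_tsq]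
  rcases i with ⟨⟩ | c | ⟨⟩
  · have : pd (tIdx : AmbIdx ι) (fun z => g (restrL z) a b) y = 0 :=
      pd_comp_restr_t y hgr
    simp [pdAmb, this]
  · have : pd (Sum.inr (Sum.inl c) : AmbIdx ι) (fun z => g (restrL z) a b) y
        = pd c (fun x => g x a b) (restrL y) := pd_comp_restr_M c y hgr
    simp [pdAmb, this]
  · have : pd (uIdx : AmbIdx ι) (fun z => g (restrL z) a b) y = 0 :=
      pd_comp_restr_u y hgr
    simp [pdAmb, this]

/-- Explicit Christoffel symbols of the ambient metric. -/
noncomputable def aChris (g : (ι → ℝ) → Matrix ι ι ℝ) (k i j : AmbIdx ι)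
    (y : AmbIdx ι → ℝ) : ℝ :=
  match k, i, j with
  | Sum.inr (Sum.inr _), Sum.inr (Sum.inl a), Sum.inr (Sum.inl b) =>
      y tIdx * g (restrL y) a b
  | Sum.inr (Sum.inl c), Sum.inr (Sum.inl a), Sum.inr (Sum.inl b) =>
      christoffel g c a b (restrL y)
  | Sum.inr (Sum.inl c), Sum.inl _, Sum.inr (Sum.inl b) =>
      (y tIdx)⁻¹ * (if c = b then 1 else 0)
  | Sum.inr (Sum.inl c), Sum.inr (Sum.inl a), Sum.inl _ =>
      (y tIdx)⁻¹ * (if c = a then 1 else 0)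
  | _, _, _ => 0

lemma christoffel_amb {g : (ι → ℝ) → Matrix ι ι ℝ}
    (hgsm : ∀ i j, ContDiff ℝ (⊤ : ℕ∞) fun x => g x i j)
    (hdet : ∀ x, IsUnit (g x).det)
    (k i j : AmbIdx ι) (y : AmbIdx ι → ℝ) (ht : y tIdx ≠ 0) :
    christoffel (ambMetric g) k i j y = aChris g k i j y := by
  have hginv : (g (restrL y))⁻¹ * g (restrL y) = 1 :=
    Matrix.nonsing_inv_mul _ (hdet _)
  unfold christoffel
  rw [ambInv_eq g hdet y ht, sum_ambIdx]
  simp only [pd_ambMetric hgsm]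
  rcases k with ⟨⟩ | c | ⟨⟩
  · -- k = t : row of ambInv is zero except at u-column, and those pdAmb vanish
    rcases i with ⟨⟩ | a | ⟨⟩ <;> rcases j with ⟨⟩ | b | ⟨⟩ <;>
      simp [ambInv, pdAmb, aChris]
  · -- k = M index c
    rcases i with ⟨⟩ | a | ⟨⟩ <;> rcases j with ⟨⟩ | b | ⟨⟩
    · simp [ambInv, pdAmb, aChris]
    · simp [ambInv, pdAmb, aChris]
      have h2 : (y tIdx : ℝ) ^ 2 ≠ 0 := pow_ne_zero _ ht
      have : ∀ d, (y tIdx ^ 2)⁻¹ * (g (restrL y))⁻¹ c d * (2 * y tIdx * g (restrL y) d b)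
          = (2 * (y tIdx)⁻¹) * ((g (restrL y))⁻¹ c d * g (restrL y) d b) := by
        intro d
        rw [pow_two] at h2 ⊢
        field_simp
      rw [Finset.sum_congr rfl fun d _ => this d, ← Finset.mul_sum,
        ← Matrix.mul_apply, hginv, Matrix.one_apply]
      split <;> simp
    · simp [ambInv, pdAmb, aChris]
    · simp [ambInv, pdAmb, aChris]
      have h2 : (y tIdx : ℝ) ^ 2 ≠ 0 := pow_ne_zero _ ht
      have : ∀ d, (y tIdx ^ 2)⁻¹ * (g (restrL y))⁻¹ c d * (2 * y tIdx * g (restrL y) d a)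
          = (2 * (y tIdx)⁻¹) * ((g (restrL y))⁻¹ c d * g (restrL y) d a) := by
        intro d
        rw [pow_two] at h2 ⊢
        field_simp
      rw [Finset.sum_congr rfl fun d _ => this d, ← Finset.mul_sum,
        ← Matrix.mul_apply, hginv, Matrix.one_apply]
      split <;> simp
    · simp [ambInv, pdAmb, aChris]
      unfold christoffel
      rw [Finset.mul_sum, Finset.mul_sum]
      refine Finset.sum_congr rfl fun d _ => ?_
      have h2 : (y tIdx : ℝ) ^ 2 ≠ 0 := pow_ne_zero _ ht
      field_simp
    · simp [ambInv, pdAmb, aChris]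
    · simp [ambInv, pdAmb, aChris]
    · simp [ambInv, pdAmb, aChris]
    · simp [ambInv, pdAmb, aChris]
  · -- k = u
    rcases i with ⟨⟩ | a | ⟨⟩ <;> rcases j with ⟨⟩ | b | ⟨⟩ <;>
      simp [ambInv, pdAmb, aChris] <;> ring

lemma hasFDerivAt_tinv (y : AmbIdx ι → ℝ) (ht : y tIdx ≠ 0) :
    HasFDerivAt (fun z : AmbIdx ι → ℝ => (z tIdx)⁻¹)
      ((-((y tIdx) ^ 2)⁻¹ : ℝ) •
        (ContinuousLinearMap.proj (tIdx : AmbIdx ι) : ((AmbIdx ι) → ℝ) →L[ℝ] ℝ)) y :=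
  (hasDerivAt_inv ht).comp_hasFDerivAt y
    ((ContinuousLinearMap.proj (tIdx : AmbIdx ι) :
      ((AmbIdx ι) → ℝ) →L[ℝ] ℝ).hasFDerivAt)

lemma diffAt_tinv (y : AmbIdx ι → ℝ) (ht : y tIdx ≠ 0) :
    DifferentiableAt ℝ (fun z : AmbIdx ι → ℝ => (z tIdx)⁻¹) y :=
  (hasFDerivAt_tinv y ht).differentiableAt

lemma pd_tinv (i : AmbIdx ι) (y : AmbIdx ι → ℝ) (ht : y tIdx ≠ 0) :
    pd i (fun z : AmbIdx ι → ℝ => (z tIdx)⁻¹) y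
      = if i = tIdx then -((y tIdx) ^ 2)⁻¹ else 0 := by
  rw [pd, (hasFDerivAt_tinv y ht).fderiv]
  simp only [ContinuousLinearMap.coe_smul', Pi.smul_apply,
    ContinuousLinearMap.proj_apply, smul_eq_mul, Pi.single_apply]
  rcases i with ⟨⟩ | c | ⟨⟩ <;> simp [tIdx]

/-- Derivatives of the ambient Christoffel symbols. -/
noncomputable def pdaChris (g : (ι → ℝ) → Matrix ι ι ℝ) (dir k i j : AmbIdx ι)
    (y : AmbIdx ι → ℝ) : ℝ :=
  match k, i, j with
  | Sum.inr (Sum.inr _), Sum.inr (Sum.inl a), Sum.inr (Sum.inl b) =>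
    (match dir with
     | Sum.inl _ => g (restrL y) a b
     | Sum.inr (Sum.inl c) => y tIdx * pd c (fun x => g x a b) (restrL y)
     | Sum.inr (Sum.inr _) => 0)
  | Sum.inr (Sum.inl c), Sum.inr (Sum.inl a), Sum.inr (Sum.inl b) =>
    (match dir with
     | Sum.inr (Sum.inl c') => pd c' (christoffel g c a b) (restrL y)
     | _ => 0)
  | Sum.inr (Sum.inl c), Sum.inl _, Sum.inr (Sum.inl b) =>
    (match dir with
     | Sum.inl _ => -((y tIdx) ^ 2)⁻¹ * (if c = b then 1 else 0)
     | _ => 0)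
  | Sum.inr (Sum.inl c), Sum.inr (Sum.inl a), Sum.inl _ =>
    (match dir with
     | Sum.inl _ => -((y tIdx) ^ 2)⁻¹ * (if c = a then 1 else 0)
     | _ => 0)
  | _, _, _ => 0

lemma pd_aChris {g : (ι → ℝ) → Matrix ι ι ℝ}
    (hgsm : ∀ i j, ContDiff ℝ (⊤ : ℕ∞) fun x => g x i j)
    (hdet : ∀ x, IsUnit (g x).det)
    (dir k i j : AmbIdx ι) (y : AmbIdx ι → ℝ) (ht : y tIdx ≠ 0) :
    pd dir (aChris g k i j) y = pdaChris g dir k i j y := by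
  have htc := diffAt_tcoord (ι := ι) y
  rcases k with ⟨⟩ | c | ⟨⟩ <;> rcases i with ⟨⟩ | a | ⟨⟩ <;> rcases j with ⟨⟩ | b | ⟨⟩ <;>
    try { show pd dir (fun _ => (0:ℝ)) y = _; simp [pd, pdaChris] }
  · -- k = c, i = t, j = b
    show pd dir (fun z => (z tIdx)⁻¹ * (if c = b then 1 else 0)) y = _
    have : (fun z : AmbIdx ι → ℝ => (z tIdx)⁻¹ * (if c = b then 1 else 0))
        = fun z => (if c = b then (1:ℝ) else 0) * (z tIdx)⁻¹ := by
      funext z; ring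
    rw [this, pd_const_mul dir _ y (diffAt_tinv y ht), pd_tinv dir y ht]
    rcases dir with ⟨⟩ | d | ⟨⟩ <;> simp [pdaChris] <;> split <;> ring
  · -- k = c, i = a, j = t
    show pd dir (fun z => (z tIdx)⁻¹ * (if c = a then 1 else 0)) y = _
    have : (fun z : AmbIdx ι → ℝ => (z tIdx)⁻¹ * (if c = a then 1 else 0))
        = fun z => (if c = a then (1:ℝ) else 0) * (z tIdx)⁻¹ := by
      funext z; ring
    rw [this, pd_const_mul dir _ y (diffAt_tinv y ht), pd_tinv dir y ht]
    rcases dir with ⟨⟩ | d | ⟨⟩ <;> simp [pdaChris] <;> split <;> ring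
  · -- k = c, i = a, j = b
    show pd dir (fun z => christoffel g c a b (restrL z)) y = _
    have hch : DifferentiableAt ℝ (christoffel g c a b) (restrL y) :=
      ((contDiff_christoffel hgsm hdet c a b).differentiable (by simp)) (restrL y)
    rcases dir with ⟨⟩ | d | ⟨⟩
    · rw [pd_comp_restr_t y hch]; rfl
    · rw [pd_comp_restr_M d y hch]; rfl
    · rw [pd_comp_restr_u y hch]; rfl
  · -- k = u, i = a, j = b
    show pd dir (fun z => z tIdx * g (restrL z) a b) y = _
    have hg : DifferentiableAt ℝ (fun z : AmbIdx ι → ℝ => g (restrL z) a b) y :=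
      diffAt_comp_restr (((hgsm a b).differentiable (by simp)) (restrL y))
    have hgr : DifferentiableAt ℝ (fun x => g x a b) (restrL y) :=
      ((hgsm a b).differentiable (by simp)) (restrL y)
    rw [pd_mul dir y htc hg, pd_tcoord]
    rcases dir with ⟨⟩ | d | ⟨⟩
    · rw [pd_comp_restr_t y hgr]; simp [pdaChris]
    · rw [pd_comp_restr_M d y hgr]; simp [pdaChris]
    · rw [pd_comp_restr_u y hgr]; simp [pdaChris]

lemma pd_christoffel_amb {g : (ι → ℝ) → Matrix ι ι ℝ}
    (hgsm : ∀ i j, ContDiff ℝ (⊤ : ℕ∞) fun x => g x i j)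
    (hdet : ∀ x, IsUnit (g x).det)
    (dir k i j : AmbIdx ι) (y : AmbIdx ι → ℝ) (ht : y tIdx ≠ 0) :
    pd dir (christoffel (ambMetric g) k i j) y = pdaChris g dir k i j y := by
  have hopen : IsOpen {z : AmbIdx ι → ℝ | z tIdx ≠ 0} :=
    isOpen_compl_singleton.preimage (continuous_apply (tIdx : AmbIdx ι))
  have hev : christoffel (ambMetric g) k i j =ᶠ[nhds y] aChris g k i j :=
    Filter.eventually_of_mem (hopen.mem_nhds ht)
      (fun z hz => christoffel_amb hgsm hdet k i j z hz)
  rw [pd_eventuallyEq dir hev, pd_aChris hgsm hdet dir k i j y ht]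

lemma christoffel_symm {g : (ι → ℝ) → Matrix ι ι ℝ}
    (hgsymm : ∀ x i j, g x i j = g x j i) (c a b : ι) (x : ι → ℝ) :
    christoffel g c a b x = christoffel g c b a x := by
  unfold christoffel
  congr 1
  refine Finset.sum_congr rfl fun l _ => ?_
  have h1 : (fun y => g y a b) = fun y => g y b a := funext fun y => hgsymm y a b
  rw [h1]
  ring

lemma riemann_amb {g : (ι → ℝ) → Matrix ι ι ℝ}
    (hgsm : ∀ i j, ContDiff ℝ (⊤ : ℕ∞) fun x => g x i j)
    (hdet : ∀ x, IsUnit (g x).det)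
    (l k i j : AmbIdx ι) (y : AmbIdx ι → ℝ) (ht : y tIdx ≠ 0) :
    riemann (ambMetric g) l k i j y =
      pdaChris g i l j k y - pdaChris g j l i k y
      + (∑ m : AmbIdx ι, aChris g l i m y * aChris g m j k y)
      - (∑ m : AmbIdx ι, aChris g l j m y * aChris g m i k y) := by
  unfold riemann
  rw [pd_christoffel_amb hgsm hdet i l j k y ht, pd_christoffel_amb hgsm hdet j l i k y ht]
  congr 1
  · congr 1
    exact Finset.sum_congr rfl fun m _ => by
      rw [christoffel_amb hgsm hdet l i m y ht, christoffel_amb hgsm hdet m j k y ht]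
  · exact Finset.sum_congr rfl fun m _ => by
      rw [christoffel_amb hgsm hdet l j m y ht, christoffel_amb hgsm hdet m i k y ht]

lemma ricci_amb {g : (ι → ℝ) → Matrix ι ι ℝ}
    (hgsm : ∀ i j, ContDiff ℝ (⊤ : ℕ∞) fun x => g x i j)
    (hdet : ∀ x, IsUnit (g x).det)
    (j k : AmbIdx ι) (y : AmbIdx ι → ℝ) (ht : y tIdx ≠ 0) :
    ricci (ambMetric g) j k y =
      ∑ i : AmbIdx ι, (pdaChris g i i k j y - pdaChris g k i i j y
      + (∑ m : AmbIdx ι, aChris g i i m y * aChris g m k j y)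
      - (∑ m : AmbIdx ι, aChris g i k m y * aChris g m i j y)) := by
  unfold ricci
  exact Finset.sum_congr rfl fun i _ => riemann_amb hgsm hdet i j i k y ht

/-- For a Ricci-flat metric g on an odd-dimensional manifold,
the ambient metric g̃ = −2 du dt + t² g is Ricci-flat and the coordinate vector
field ∂_u is null and parallel (all Christoffel symbols Γ^k_{i u} vanish). -/
theorem ambient_of_ricci_flat
    (g : (ι → ℝ) → Matrix ι ι ℝ)
    (hodd : Odd (Fintype.card ι))
    (hgsm : ∀ i j, ContDiff ℝ (⊤ : ℕ∞) fun y => g y i j)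
    (hgsymm : ∀ x i j, g x i j = g x j i)
    (hdet : ∀ x, IsUnit (g x).det)
    (hricflat : ∀ x i j, ricci g i j x = 0) :
    (∀ y : AmbIdx ι → ℝ, 0 < y tIdx →
      ∀ i j, ricci (ambMetric g) i j y = 0) ∧
    (∀ y : AmbIdx ι → ℝ, ambMetric g y uIdx uIdx = 0) ∧
    (∀ y : AmbIdx ι → ℝ, 0 < y tIdx →
      ∀ k i, christoffel (ambMetric g) k i uIdx y = 0) := by
  refine ⟨?_, fun y => rfl, ?_⟩
  · intro y hy j k
    have ht : y tIdx ≠ 0 := ne_of_gt hy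
    rw [ricci_amb hgsm hdet j k y ht, sum_ambIdx]
    simp only [sum_ambIdx]
    rcases j with ⟨⟩ | b | ⟨⟩ <;> rcases k with ⟨⟩ | a | ⟨⟩ <;>
      simp [aChris, pdaChris]
    · rw [pow_two, mul_inv_rev]
      ring
    · have hsy : ∀ c, christoffel g c a c (restrL y) = christoffel g c c a (restrL y) :=
        fun c => christoffel_symm hgsymm c a c _
      simp [hsy]
    · simp [mul_comm]
    · have h := hricflat (restrL y) b a
      unfold ricci riemann at h
      rw [← Finset.sum_sub_distrib]
      exact h
  · intro y hy k i
    have ht : y tIdx ≠ 0 := ne_of_gt hy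
    rw [christoffel_amb hgsm hdet k i uIdx y ht]
    rcases k with ⟨⟩ | c | ⟨⟩ <;> rcases i with ⟨⟩ | a | ⟨⟩ <;> rfl
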